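/- Let 0 < λ ≤ 1 and let f ∈ 𝒢(λ) with f' not identically equal to 1. Then there exists an integer n ≥ 1 such that f'(z) ≺ (1 + z^n)^{λ/n} on 𝔻. -/

import Mathlib

/-!
Write `f' = exp g` with `g 0 = 0` and put `G = g / λ`, `ω = exp G - 1`; the hypothesis on `f`
reads `Re (z G') < 1/2`. If `ω` left the unit disc, Jack's lemma at a first point `z₀` with
`|ω z₀| = 1` would give `z₀ ω'(z₀) = k ω(z₀)` with `k ≥ 1`, hence
`Re (z₀ G'(z₀)) = k Re (ω / (1 + ω)) = k / 2 ≥ 1/2`. So `ω` maps `𝔻` into `𝔻`; then `Re (1 + ω) > 0`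
keeps `Im G` in `(-π/2, π/2)` by connectedness, so `log (1 + ω) = G` and `f' = (1 + ω)^λ`:
the exponent `n = 1` works.
-/

open Complex Metric Set

/-- `p ≺ q` on the unit disk: there is an analytic `ω : 𝔻 → 𝔻` with `ω 0 = 0`
and `p = q ∘ ω` on `𝔻`. -/
def Subord (p q : ℂ → ℂ) : Prop :=
  ∃ ω : ℂ → ℂ, DifferentiableOn ℂ ω (ball 0 1) ∧
    Set.MapsTo ω (ball 0 1) (ball 0 1) ∧ ω 0 = 0 ∧
    ∀ z ∈ ball (0:ℂ) 1, p z = q (ω z)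

theorem exists_hasDerivAt_logDeriv_and_exp_eq {p : ℂ → ℂ} {c : ℂ} {r : ℝ}
    (hp : DifferentiableOn ℂ p (ball c r)) (hp0 : ∀ z ∈ ball c r, p z ≠ 0) :
    ∃ g : ℂ → ℂ, g c = log (p c) ∧
      ∀ z ∈ ball c r, HasDerivAt g (deriv p z / p z) z ∧ exp (g z) = p z := by
  have hp' : DifferentiableOn ℂ (deriv p) (ball c r) :=
    (hp.analyticOnNhd isOpen_ball).deriv.differentiableOn
  obtain ⟨g, hgc, hg⟩ := ((hp'.div hp hp0).isExactOn_ball).with_val_at c (log (p c))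
  have hu : ∀ z ∈ ball c r, HasDerivAt (fun w => p w * exp (-g w)) 0 z := fun z hz => by
    have hpz := (hp.differentiableAt (isOpen_ball.mem_nhds hz)).hasDerivAt
    refine (hpz.mul (hg z hz).neg.cexp).congr_deriv ?_
    simp only [Pi.div_apply]
    field_simp [hp0 z hz]
    ring
  refine ⟨g, hgc, fun z hz => ⟨hg z hz, ?_⟩⟩
  have hc : c ∈ ball c r := mem_ball_self (pos_of_mem_ball hz)
  have hcz := isOpen_ball.is_const_of_deriv_eq_zero (convex_ball c r).isPreconnected
    (fun w hw => (hu w hw).differentiableAt.differentiableWithinAt)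
    (fun w hw => (hu w hw).deriv) hz hc
  simp only [hgc, exp_neg, exp_log (hp0 c hc), mul_inv_cancel₀ (hp0 c hc),
    mul_inv_eq_one₀ (exp_ne_zero _)] at hcz
  exact hcz.symm

theorem im_eq_zero_and_one_le_re_of_norm_le_norm {ψ : ℂ → ℂ} {d : ℂ} (hψ : HasDerivAt ψ d 1)
    (hle : ∀ w : ℂ, ‖w‖ ≤ 1 → ‖ψ w‖ ≤ ‖w‖) (h1 : ψ 1 = 1) : d.im = 0 ∧ 1 ≤ d.re := by
  have hre_le : ∀ w : ℂ, ‖w‖ ≤ 1 → (ψ w).re ≤ ‖w‖ := fun w hw =>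
    (re_le_norm _).trans (hle w hw)
  constructor
  · have hcirc : HasDerivAt (fun w : ℂ => ψ (exp (w * I))) (d * I) ((0 : ℝ) : ℂ) := by
      have hexp : HasDerivAt (fun w : ℂ => exp (w * I)) I ((0 : ℝ) : ℂ) := by
        simpa using ((hasDerivAt_id ((0 : ℝ) : ℂ)).mul_const I).cexp
      exact HasDerivAt.comp (h := fun w : ℂ => exp (w * I)) _ (by simpa using hψ) hexp
    have hmax : IsLocalMax (fun θ : ℝ => (ψ (exp (θ * I))).re) 0 :=
      Filter.Eventually.of_forall fun θ => by
        simpa [h1] using hre_le _ (norm_exp_ofReal_mul_I θ).le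
    simpa using hmax.hasDerivAt_eq_zero hcirc.real_of_complex
  · have hrad : HasDerivAt (fun t : ℝ => (ψ t).re - t) (d.re - 1) 1 :=
      (by simpa using hψ : HasDerivAt ψ d ((1 : ℝ) : ℂ)).real_of_complex.sub (hasDerivAt_id 1)
    have hmax : IsLocalMaxOn (fun t : ℝ => (ψ t).re - t) (Icc 0 1) 1 :=
      Filter.eventually_of_mem self_mem_nhdsWithin fun t ht => by
        have := hre_le t (by simpa [abs_of_nonneg ht.1] using ht.2)
        rw [norm_real, Real.norm_of_nonneg ht.1] at this
        simp only [ofReal_one, h1, one_re]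
        linarith
    have hdir : (-1 : ℝ) ∈ posTangentConeAt (Icc (0 : ℝ) 1) 1 :=
      mem_posTangentConeAt_of_segment_subset (by simp [segment_eq_Icc'])
    have := hmax.hasFDerivWithinAt_nonpos hrad.hasFDerivAt.hasFDerivWithinAt hdir
    simp only [ContinuousLinearMap.toSpanSingleton_apply, smul_eq_mul] at this
    linarith

/-- Jack's lemma. -/
theorem exists_one_le_mul_deriv_eq_of_forall_norm_le {F : ℂ → ℂ} {z₀ : ℂ}
    (hF : DifferentiableOn ℂ F (ball 0 ‖z₀‖)) (hFz₀ : DifferentiableAt ℂ F z₀) (hF0 : F 0 = 0)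
    (hmax : ∀ w : ℂ, ‖w‖ ≤ ‖z₀‖ → ‖F w‖ ≤ ‖F z₀‖) (hne : F z₀ ≠ 0) :
    ∃ k : ℝ, 1 ≤ k ∧ z₀ * deriv F z₀ = k * F z₀ := by
  have hz₀ : z₀ ≠ 0 := by rintro rfl; exact hne hF0
  have hmaps : MapsTo (fun w => F (z₀ * w)) (ball 0 1) (closedBall (F (z₀ * 0)) ‖F z₀‖) :=
    fun w hw => by
      have hz₀w : ‖z₀ * w‖ ≤ ‖z₀‖ := by
        simpa [norm_mul] using mul_le_of_le_one_right (norm_nonneg z₀) (mem_ball_zero_iff.1 hw).le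
      simpa [hF0] using hmax _ hz₀w
  have hdiff : DifferentiableOn ℂ (fun w => F (z₀ * w)) (ball 0 1) :=
    hF.comp (differentiableOn_id.const_mul z₀) fun w hw => by
      simpa [norm_mul] using mul_lt_of_lt_one_right (norm_pos_iff.2 hz₀) (mem_ball_zero_iff.1 hw)
  have hschwarz : ∀ w : ℂ, ‖w‖ ≤ 1 → ‖F (z₀ * w)‖ ≤ ‖F z₀‖ * ‖w‖ := fun w hw => by
    rcases hw.lt_or_eq with hw | hw
    · simpa [hF0] using dist_le_div_mul_dist_of_mapsTo_ball hdiff hmaps (mem_ball_zero_iff.2 hw)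
    · simpa [hw] using hmax (z₀ * w) (by simp [hw])
  have hψ : HasDerivAt (fun w => F (z₀ * w) / F z₀) (deriv F z₀ * z₀ / F z₀) 1 := by
    have hmul : HasDerivAt (fun w => z₀ * w) z₀ 1 := by
      simpa using (hasDerivAt_id (1 : ℂ)).const_mul z₀
    exact (HasDerivAt.comp 1 (by simpa using hFz₀.hasDerivAt) hmul).div_const _
  obtain ⟨him, hre⟩ := im_eq_zero_and_one_le_re_of_norm_le_norm hψ
    (fun w hw => by
      rw [norm_div, div_le_iff₀ (norm_pos_iff.2 hne)]
      exact (hschwarz w hw).trans_eq (mul_comm _ _))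
    (by simp [hne])
  refine ⟨_, hre, ?_⟩
  have hreal : deriv F z₀ * z₀ / F z₀ = (deriv F z₀ * z₀ / F z₀).re :=
    ext (by simp) (by simpa using him)
  rw [← hreal]
  field_simp

theorem exists_norm_eq_forall_norm_le {E F : Type*} [NormedAddCommGroup E] [NormedSpace ℝ E]
    [ProperSpace E] [NormedAddCommGroup F] {f : E → F} {R c : ℝ}
    (hf : ContinuousOn f (ball 0 R)) (h0 : ‖f 0‖ < c) {z : E} (hz : z ∈ ball 0 R)
    (hfz : c ≤ ‖f z‖) :
    ∃ z₀ ∈ ball (0 : E) R, ‖f z₀‖ = c ∧ ∀ w : E, ‖w‖ ≤ ‖z₀‖ → ‖f w‖ ≤ c := by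
  have hzR : closedBall (0 : E) ‖z‖ ⊆ ball 0 R := closedBall_subset_ball (by simpa using hz)
  set S := closedBall (0 : E) ‖z‖ ∩ f ⁻¹' {y | c ≤ ‖y‖}
  have hS : IsCompact S := (isCompact_closedBall 0 ‖z‖).of_isClosed_subset
    ((hf.mono hzR).preimage_isClosed_of_isClosed isClosed_closedBall
      (isClosed_le continuous_const continuous_norm)) inter_subset_left
  obtain ⟨z₀, ⟨hz₀z, hcz₀⟩, hmin⟩ :=
    hS.exists_isMinOn ⟨z, by simp [S, hfz]⟩ continuous_norm.continuousOn
  have hz₀R : z₀ ∈ ball (0 : E) R := hzR hz₀z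
  have hz₀z' : ‖z₀‖ ≤ ‖z‖ := by simpa using hz₀z
  have hz₀0 : ‖z₀‖ ≠ 0 := fun h => by
    rw [norm_eq_zero.1 h] at hcz₀
    exact (lt_of_lt_of_le h0 hcz₀).false
  have hlt : ball (0 : E) ‖z₀‖ ⊆ closedBall 0 ‖z₀‖ ∩ f ⁻¹' {y | ‖y‖ ≤ c} := fun w hw => by
    have hw' : ‖w‖ < ‖z₀‖ := by simpa using hw
    refine ⟨ball_subset_closedBall hw, show ‖f w‖ ≤ c from le_of_not_ge fun hcw => ?_⟩
    exact (hmin ⟨by simpa using hw'.le.trans hz₀z', hcw⟩).not_gt hw'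
  have hle : closedBall (0 : E) ‖z₀‖ ⊆ closedBall 0 ‖z₀‖ ∩ f ⁻¹' {y | ‖y‖ ≤ c} := by
    have hclosed : IsClosed (closedBall (0 : E) ‖z₀‖ ∩ f ⁻¹' {y | ‖y‖ ≤ c}) :=
      (hf.mono (closedBall_subset_ball (by simpa using hz₀R))).preimage_isClosed_of_isClosed
        isClosed_closedBall (isClosed_le continuous_norm continuous_const)
    exact (closure_ball (0 : E) hz₀0).symm.subset.trans (closure_minimal hlt hclosed)
  refine ⟨z₀, hz₀R, le_antisymm (hle (by simp)).2 hcz₀, fun w hw => (hle (by simpa using hw)).2⟩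

theorem re_div_one_add_of_norm_eq_one {w : ℂ} (hw : ‖w‖ = 1) (hw' : 1 + w ≠ 0) :
    (w / (1 + w)).re = 1 / 2 := by
  have hsq : w.re * w.re + w.im * w.im = 1 := by
    rw [← normSq_apply, normSq_eq_norm_sq, hw, one_pow]
  have hN : normSq (1 + w) = 2 * (1 + w.re) := by
    simp only [normSq_apply, add_re, add_im, one_re, one_im]
    linear_combination hsq
  have hN0 : normSq (1 + w) ≠ 0 := normSq_eq_zero.not.2 hw'
  rw [div_re, ← add_div, div_eq_iff hN0, hN]
  simp only [add_re, add_im, one_re, one_im]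
  linear_combination hsq

theorem norm_exp_sub_one_lt_one {G G' : ℂ → ℂ}
    (hG : ∀ z ∈ ball (0 : ℂ) 1, HasDerivAt G (G' z) z) (hG0 : G 0 = 0)
    (hre : ∀ z ∈ ball (0 : ℂ) 1, (z * G' z).re < 1 / 2) {z : ℂ} (hz : z ∈ ball (0 : ℂ) 1) :
    ‖exp (G z) - 1‖ < 1 := by
  set F : ℂ → ℂ := fun z => exp (G z) - 1
  have hF : ∀ z ∈ ball (0 : ℂ) 1, HasDerivAt F ((1 + F z) * G' z) z := fun z hz => by
    simpa [F] using (hG z hz).cexp.sub_const 1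
  have hFd : DifferentiableOn ℂ F (ball 0 1) := fun z hz =>
    (hF z hz).differentiableAt.differentiableWithinAt
  by_contra! hz1
  obtain ⟨z₀, hz₀, hFz₀, hmax⟩ :=
    exists_norm_eq_forall_norm_le hFd.continuousOn (by simp [F, hG0]) hz hz1
  have hne : F z₀ ≠ 0 := norm_ne_zero_iff.1 (by simp [hFz₀])
  obtain ⟨k, hk, hjack⟩ := exists_one_le_mul_deriv_eq_of_forall_norm_le
    (hFd.mono (ball_subset_ball (mem_ball_zero_iff.1 hz₀).le)) (hF z₀ hz₀).differentiableAt
    (by simp [F, hG0]) (hFz₀ ▸ hmax) hne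
  have h1F : 1 + F z₀ ≠ 0 := by simp [F, exp_ne_zero]
  have hG'z₀ : z₀ * G' z₀ = k * (F z₀ / (1 + F z₀)) := by
    rw [(hF z₀ hz₀).deriv] at hjack
    field_simp
    linear_combination hjack
  have := hre z₀ hz₀
  rw [hG'z₀, re_ofReal_mul, re_div_one_add_of_norm_eq_one hFz₀ h1F] at this
  linarith

theorem abs_im_lt_pi_div_two_of_re_exp_pos {U : Set ℂ} {G : ℂ → ℂ} (hU : IsPreconnected U)
    (hG : ContinuousOn G U) {z₀ : ℂ} (hz₀ : z₀ ∈ U) (h₀ : |(G z₀).im| < Real.pi / 2)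
    (hpos : ∀ z ∈ U, 0 < (exp (G z)).re) {z : ℂ} (hz : z ∈ U) : |(G z).im| < Real.pi / 2 := by
  set S := (fun w => (G w).im) '' U
  have hS : IsPreconnected S := hU.image _ (continuous_im.comp_continuousOn hG)
  have hcos : ∀ x ∈ S, 0 < Real.cos x := by
    rintro _ ⟨w, hw, rfl⟩
    have := hpos w hw
    rw [exp_re] at this
    exact pos_of_mul_pos_right this (Real.exp_pos _).le
  have hzS : (G z).im ∈ S := mem_image_of_mem _ hz
  have hz₀S : (G z₀).im ∈ S := mem_image_of_mem _ hz₀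
  rw [abs_lt] at h₀ ⊢
  constructor
  · by_contra! h
    simpa using hcos _ (hS.Icc_subset hzS hz₀S ⟨h, h₀.1.le⟩)
  · by_contra! h
    simpa using hcos _ (hS.Icc_subset hz₀S hzS ⟨h₀.2.le, h⟩)

theorem subord_exp_mul_log_one_add {p : ℂ → ℂ} {lam : ℝ} (hlam : 0 < lam)
    (hp : DifferentiableOn ℂ p (ball 0 1)) (hp0 : p 0 = 1) (hpne : ∀ z ∈ ball (0 : ℂ) 1, p z ≠ 0)
    (hre : ∀ z ∈ ball (0 : ℂ) 1, (z * deriv p z / p z).re < lam / 2) :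
    Subord p (fun z => exp (lam * log (1 + z))) := by
  obtain ⟨g, hg0, hg⟩ := exists_hasDerivAt_logDeriv_and_exp_eq hp hpne
  set G : ℂ → ℂ := fun z => g z / lam
  have hG : ∀ z ∈ ball (0 : ℂ) 1, HasDerivAt G (deriv p z / p z / lam) z := fun z hz =>
    (hg z hz).1.div_const _
  have hG0 : G 0 = 0 := by simp [G, hg0, hp0]
  have hGd : DifferentiableOn ℂ G (ball 0 1) := fun z hz =>
    (hG z hz).differentiableAt.differentiableWithinAt
  have hω : ∀ z ∈ ball (0 : ℂ) 1, ‖exp (G z) - 1‖ < 1 :=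
    fun z hz => norm_exp_sub_one_lt_one hG hG0 (fun z hz => by
      rw [← mul_div_assoc, ← mul_div_assoc, div_ofReal_re, div_lt_iff₀ hlam]
      linarith [hre z hz]) hz
  have hpos : ∀ z ∈ ball (0 : ℂ) 1, 0 < (exp (G z)).re := fun z hz => by
    have := (abs_re_le_norm _).trans_lt (hω z hz)
    rw [sub_re, one_re, abs_lt] at this
    linarith
  refine ⟨fun z => exp (G z) - 1, hGd.cexp.sub_const 1, fun z hz => mem_ball_zero_iff.2 (hω z hz),
    by simp [hG0], fun z hz => ?_⟩
  have him := abs_lt.1 <| abs_im_lt_pi_div_two_of_re_exp_pos (convex_ball (0 : ℂ) 1).isPreconnected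
    hGd.continuousOn (mem_ball_self one_pos) (by simp [hG0, Real.pi_pos]) hpos hz
  change p z = exp (lam * log (1 + (exp (G z) - 1)))
  rw [add_sub_cancel, log_exp (by linarith [Real.pi_pos]) (by linarith [Real.pi_pos]),
    mul_div_cancel₀ _ (ofReal_ne_zero.2 hlam.ne'), (hg z hz).2]

theorem stmt3_general (lam : ℝ) (hlam0 : 0 < lam)
    (f : ℂ → ℂ)
    (hf : DifferentiableOn ℂ f (ball 0 1))
    (hfd0 : deriv f 0 = 1)
    (hfd : ∀ z ∈ ball (0:ℂ) 1, deriv f z ≠ 0)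
    (hG : ∀ z ∈ ball (0:ℂ) 1,
      (1 + z * deriv (deriv f) z / deriv f z).re < 1 + lam / 2) :
    ∃ n : ℕ, 1 ≤ n ∧
      Subord (deriv f)
        (fun z => Complex.exp (((lam / n : ℝ) : ℂ) * Complex.log (1 + z ^ n))) := by
  have hf' : DifferentiableOn ℂ (deriv f) (ball 0 1) :=
    (hf.analyticOnNhd isOpen_ball).deriv.differentiableOn
  refine ⟨1, le_rfl, ?_⟩
  simpa using subord_exp_mul_log_one_add hlam0 hf' hfd0 hfd fun z hz => by
    simpa using hG z hz

/-- Let `0 < λ ≤ 1` and `f ∈ 𝒢(λ)` with `f'` not identically `1` on `𝔻`.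
Then there is an integer `n ≥ 1` with `f' ≺ (1 + z^n)^{λ/n}` on `𝔻`. -/
theorem stmt3 (lam : ℝ) (hlam0 : 0 < lam) (hlam1 : lam ≤ 1)
    (f : ℂ → ℂ)
    (hf : DifferentiableOn ℂ f (ball 0 1))
    (hf0 : f 0 = 0) (hfd0 : deriv f 0 = 1)
    (hfd : ∀ z ∈ ball (0:ℂ) 1, deriv f z ≠ 0)
    (hG : ∀ z ∈ ball (0:ℂ) 1,
      (1 + z * deriv (deriv f) z / deriv f z).re < 1 + lam / 2)
    (hne1 : ¬ (∀ z ∈ ball (0:ℂ) 1, deriv f z = 1)) :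
    ∃ n : ℕ, 1 ≤ n ∧
      Subord (deriv f)
        (fun z => Complex.exp (((lam / n : ℝ) : ℂ) * Complex.log (1 + z ^ n))) :=
  stmt3_general lam hlam0 f hf hfd0 hfd hG
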